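/- arXiv:2604.28004 — 5 statements merged into one kernel-verified Lean document; each statement's English description precedes it below -/
import Mathlib

section
/- Let A be a nonempty convex subset of a real normed space X with A ≠ X, let 0 < r < ∞, and let C ⊆ B_r(A) be a subset whose distance to the boundary ∂B_r(A) equals γ > 0. Then for every 0 < δ ≤ min{r, γ}, the set C is contained in B_{r-δ}(A). -/
/-!
Write `d = |c A|` and `B = B_r(A)`. For `a ∈ A`, convexity makes `|·A|` grow at least linearly
along the ray `t ↦ a + t (c - a)`, `t ≥ 1`: its value at `t` is at least `t d`. By continuity it
takes the value `r` at some `t ≤ r / d`, and such a point `q` lies on `∂B`, because further out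
along the ray the distance exceeds `r`. Hence `|c ∂B| ≤ |c q| = (t - 1)‖c - a‖ ≤ (r/d - 1)‖c - a‖`,
and taking the infimum over `a ∈ A` gives `|c ∂B| ≤ r - d`. So `γ ≤ r - d`, i.e. `d ≤ r - γ`.
-/

open Metric Filter Topology

namespace Convex

variable {X : Type*} [NormedAddCommGroup X] [NormedSpace ℝ X] {A : Set X}

lemma mul_infDist_le_infDist_add_smul_sub (hconv : Convex ℝ A) {a : X} (ha : a ∈ A) (x : X)
    {s : ℝ} (hs : 1 ≤ s) : s * infDist x A ≤ infDist (a + s • (x - a)) A := by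
  have hs0 : 0 < s := one_pos.trans_le hs
  refine (le_infDist ⟨a, ha⟩).2 fun b hb => ?_
  -- `x` is the image of `a + s • (x - a)` under the homothety of ratio `s⁻¹` centred at `a`,
  -- which maps `b` into `A`.
  have hmem : a + s⁻¹ • (b - a) ∈ A :=
    hconv.add_smul_sub_mem ha hb ⟨inv_nonneg.2 hs0.le, inv_le_one_of_one_le₀ hs⟩
  have hdist : dist x (a + s⁻¹ • (b - a)) = s⁻¹ * dist (a + s • (x - a)) b := by
    have : x - (a + s⁻¹ • (b - a)) = s⁻¹ • (a + s • (x - a) - b) := by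
      simp only [smul_sub, smul_add, smul_smul, inv_mul_cancel₀ hs0.ne', one_smul]
      abel
    rw [dist_eq_norm, dist_eq_norm, this, norm_smul, Real.norm_of_nonneg (inv_nonneg.2 hs0.le)]
  calc s * infDist x A ≤ s * (s⁻¹ * dist (a + s • (x - a)) b) := by
        rw [← hdist]; exact mul_le_mul_of_nonneg_left (infDist_le_dist_of_mem hmem) hs0.le
    _ = dist (a + s • (x - a)) b := by field_simp

lemma mem_frontier_of_infDist_eq (hconv : Convex ℝ A) (hA : A.Nonempty) {r : ℝ} (hr : 0 < r)
    {q : X} (hq : infDist q A = r) : q ∈ frontier {p : X | infDist p A ≤ r} := by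
  obtain ⟨a, ha⟩ := hA
  rw [frontier_eq_closure_inter_closure]
  refine ⟨subset_closure hq.le, ?_⟩
  have hray : Tendsto (fun s : ℝ => a + s • (q - a)) (𝓝[>] 1) (𝓝 q) := by
    have : Continuous fun s : ℝ => a + s • (q - a) := by fun_prop
    simpa using (this.tendsto 1).mono_left nhdsWithin_le_nhds
  refine mem_closure_of_tendsto hray ?_
  filter_upwards [self_mem_nhdsWithin] with s (hs : 1 < s)
  have hgrow := hconv.mul_infDist_le_infDist_add_smul_sub ha q hs.le
  rw [hq] at hgrow
  show ¬infDist _ A ≤ r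
  linarith [mul_lt_mul_of_pos_right hs hr]

lemma exists_infDist_add_smul_sub_eq (hconv : Convex ℝ A) {a : X} (ha : a ∈ A) {c : X}
    {r : ℝ} (hd : 0 < infDist c A) (hdr : infDist c A ≤ r) :
    ∃ t, 1 ≤ t ∧ t * infDist c A ≤ r ∧ infDist (a + t • (c - a)) A = r := by
  have hcont : Continuous fun t : ℝ => infDist (a + t • (c - a)) A :=
    (continuous_infDist_pt A).comp (by fun_prop)
  have hT : 1 ≤ r / infDist c A := (one_le_div hd).2 hdr
  have hstart : infDist (a + (1 : ℝ) • (c - a)) A ≤ r := by simpa using hdr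
  have hend : r ≤ infDist (a + (r / infDist c A) • (c - a)) A := by
    have hgrow := hconv.mul_infDist_le_infDist_add_smul_sub ha c hT
    rwa [div_mul_cancel₀ r hd.ne'] at hgrow
  obtain ⟨t, ⟨ht1, -⟩, hgt⟩ := intermediate_value_Icc hT hcont.continuousOn ⟨hstart, hend⟩
  exact ⟨t, ht1, hgt ▸ hconv.mul_infDist_le_infDist_add_smul_sub ha c ht1, hgt⟩

lemma infDist_frontier_le_sub_infDist (hconv : Convex ℝ A) (hA : A.Nonempty) {c : X} {r : ℝ}
    (hd : 0 < infDist c A) (hdr : infDist c A ≤ r) :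
    infDist c (frontier {p : X | infDist p A ≤ r}) ≤ r - infDist c A := by
  set d := infDist c A with hd_def
  set k := r / d - 1 with hk_def
  have hk : 0 ≤ k := sub_nonneg.2 ((one_le_div hd).2 hdr)
  have hbound : ∀ a ∈ A, infDist c (frontier {p : X | infDist p A ≤ r}) ≤ k * dist c a := by
    intro a ha
    obtain ⟨t, ht1, htd, hq⟩ := hconv.exists_infDist_add_smul_sub_eq ha hd hdr
    have hfront := hconv.mem_frontier_of_infDist_eq hA (hd.trans_le hdr) hq
    have hcq : dist c (a + t • (c - a)) = (t - 1) * dist c a := by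
      have : c - (a + t • (c - a)) = (1 - t) • (c - a) := by module
      rw [dist_eq_norm, dist_eq_norm, this, norm_smul, Real.norm_of_nonpos (by linarith)]
      ring
    have htk : t - 1 ≤ k := by
      have := (le_div_iff₀ hd).2 htd
      linarith
    calc infDist c _ ≤ dist c (a + t • (c - a)) := infDist_le_dist_of_mem hfront
      _ = (t - 1) * dist c a := hcq
      _ ≤ k * dist c a := mul_le_mul_of_nonneg_right htk dist_nonneg
  have := hA.to_subtype
  calc infDist c _ ≤ ⨅ a : A, k * dist c a := le_ciInf fun a => hbound a a.2
    _ = k * d := by rw [hd_def, infDist_eq_iInf, Real.mul_iInf_of_nonneg hk]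
    _ = r - d := by rw [hk_def]; field_simp

end Convex

theorem stmt6_general {X : Type*} [NormedAddCommGroup X] [NormedSpace ℝ X] (A : Set X)
    (hA : A.Nonempty) (hconv : Convex ℝ A) (r : ℝ)
    (C : Set X) (hC : C ⊆ {p : X | Metric.infDist p A ≤ r}) (γ : ℝ)
    (hdist :
      sInf ((fun c => Metric.infDist c (frontier {p : X | Metric.infDist p A ≤ r})) '' C) = γ)
    (δ : ℝ) (hδ : δ ≤ min r γ) :
    C ⊆ {p : X | Metric.infDist p A ≤ r - δ} := by
  intro c hc
  have hδr : δ ≤ r := hδ.trans (min_le_left _ _)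
  have hδγ : δ ≤ γ := hδ.trans (min_le_right _ _)
  have hγ : γ ≤ infDist c (frontier {p : X | infDist p A ≤ r}) := by
    rw [← hdist]
    exact csInf_le ⟨0, by rintro _ ⟨_, _, rfl⟩; exact infDist_nonneg⟩ ⟨c, hc, rfl⟩
  show infDist c A ≤ r - δ
  rcases (infDist_nonneg : 0 ≤ infDist c A).eq_or_lt with hd | hd
  · linarith
  · linarith [hconv.infDist_frontier_le_sub_infDist hA hd (hC hc)]

/-- Let `A` be a nonempty convex proper subset of a real normed space, `0 < r`, and let
`C ⊆ B_r(A)` be at distance `γ > 0` from the boundary `∂ B_r(A)`. Then for every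
`0 < δ ≤ min r γ`, the set `C` is contained in `B_{r-δ}(A)`. -/
theorem stmt6 {X : Type*} [NormedAddCommGroup X] [NormedSpace ℝ X] (A : Set X)
    (hA : A.Nonempty) (hconv : Convex ℝ A) (hne : A ≠ Set.univ) (r : ℝ) (hr : 0 < r)
    (C : Set X) (hC : C ⊆ {p : X | Metric.infDist p A ≤ r}) (γ : ℝ) (hγ : 0 < γ)
    (hdist :
      sInf ((fun c => Metric.infDist c (frontier {p : X | Metric.infDist p A ≤ r})) '' C) = γ)
    (δ : ℝ) (hδ0 : 0 < δ) (hδ : δ ≤ min r γ) :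
    C ⊆ {p : X | Metric.infDist p A ≤ r - δ} :=
  stmt6_general A hA hconv r C hC γ hdist δ hδ
end

section
/- Let X be a metric space and M_1, ..., M_n nonempty closed subsets with pairwise finite Hausdorff distances. Suppose K_1 and K_2 are both solutions of the Fermat–Steiner problem (minimizers of K ↦ Σ_i d_H(K, M_i) over nonempty closed sets K with all d_H(K, M_i) finite) with d_H(K_1, M_i) = d_H(K_2, M_i) = d_i for all i, and K_1 ⊆ K_2. Then any nonempty closed set K with K_1 ⊆ K ⊆ K_2 is also a solution with d_H(K, M_i) = d_i for all i. -/
/-! A set squeezed between `K₁` and `K₂` is no farther from `M` than the worse of the two, and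
hence no farther than the common distance `d i` when `K₁, K₂` share the distance vector `d`.
Its cost is then at most the optimal cost, so it is a solution; and since all `d i` are finite,
a sum of termwise smaller finite terms can only reach the optimum if every term is equal. -/

open EMetric ENNReal

/-- `K` is a solution of the Fermat–Steiner problem on the boundary sets `M i`:
`K` is nonempty, closed, at finite Hausdorff distance from every `M i`, and minimizes
the sum of Hausdorff distances to the `M i` among all such sets. -/
def IsFSSol {X : Type*} [MetricSpace X] {n : ℕ} (M : Fin n → Set X) (K : Set X) : Prop :=
  K.Nonempty ∧ IsClosed K ∧ (∀ i, hausdorffEdist K (M i) ≠ ⊤) ∧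
  ∀ K' : Set X, K'.Nonempty → IsClosed K' → (∀ i, hausdorffEdist K' (M i) ≠ ⊤) →
    (∑ i, hausdorffEdist K (M i)) ≤ ∑ i, hausdorffEdist K' (M i)

open Metric

theorem ENNReal.sum_eq_sum_iff_of_le {ι : Type*} [Fintype ι] {f g : ι → ℝ≥0∞}
    (hle : ∀ i, f i ≤ g i) (hg : ∀ i, g i ≠ ⊤) : ∑ i, f i = ∑ i, g i ↔ f = g := by
  lift g to ι → NNReal using hg
  lift f to ι → NNReal using fun i => ne_top_of_le_ne_top coe_ne_top (hle i)
  simp only [← coe_finset_sum, coe_inj, coe_le_coe, funext_iff] at hle ⊢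
  simpa using Finset.sum_eq_sum_iff_of_le (s := Finset.univ) fun i _ => hle i

theorem Metric.hausdorffEDist_le_max_of_subset_of_subset {X : Type*} [PseudoEMetricSpace X]
    {K₁ K K₂ : Set X} (M : Set X) (h₁ : K₁ ⊆ K) (h₂ : K ⊆ K₂) :
    hausdorffEDist K M ≤ max (hausdorffEDist K₁ M) (hausdorffEDist K₂ M) := by
  apply hausdorffEDist_le_of_infEDist
  · intro x hx
    exact (infEDist_le_hausdorffEDist_of_mem (h₂ hx)).trans (le_max_right _ _)
  · intro y hy
    calc infEDist y K ≤ infEDist y K₁ := infEDist_anti h₁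
      _ ≤ hausdorffEDist M K₁ := infEDist_le_hausdorffEDist_of_mem hy
      _ = hausdorffEDist K₁ M := hausdorffEDist_comm
      _ ≤ max (hausdorffEDist K₁ M) (hausdorffEDist K₂ M) := le_max_left _ _

theorem IsFSSol.of_sum_le {X : Type*} [MetricSpace X] {n : ℕ} {M : Fin n → Set X} {K₁ K : Set X}
    (hK₁ : IsFSSol M K₁) (hne : K.Nonempty) (hcl : IsClosed K)
    (hfin : ∀ i, hausdorffEdist K (M i) ≠ ⊤)
    (hsum : ∑ i, hausdorffEdist K (M i) ≤ ∑ i, hausdorffEdist K₁ (M i)) : IsFSSol M K :=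
  ⟨hne, hcl, hfin, fun K' hne' hcl' hfin' => hsum.trans (hK₁.2.2.2 K' hne' hcl' hfin')⟩

theorem stmt13_general {X : Type*} [MetricSpace X] {n : ℕ} (M : Fin n → Set X)
    (d : Fin n → ℝ≥0∞)
    (K₁ K₂ : Set X) (hK₁ : IsFSSol M K₁)
    (hd₁ : ∀ i, hausdorffEdist K₁ (M i) = d i)
    (hd₂ : ∀ i, hausdorffEdist K₂ (M i) = d i)
    (K : Set X) (hKne : K.Nonempty) (hKcl : IsClosed K) (h1K : K₁ ⊆ K) (hK2 : K ⊆ K₂) :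
    IsFSSol M K ∧ ∀ i, hausdorffEdist K (M i) = d i := by
  have hd_fin : ∀ i, d i ≠ ⊤ := fun i => hd₁ i ▸ hK₁.2.2.1 i
  have hle : ∀ i, hausdorffEdist K (M i) ≤ d i := fun i => by
    have hK₁i : hausdorffEDist K₁ (M i) = d i := hd₁ i
    have hK₂i : hausdorffEDist K₂ (M i) = d i := hd₂ i
    have h := hausdorffEDist_le_max_of_subset_of_subset (M i) h1K hK2
    rwa [hK₁i, hK₂i, max_self] at h
  have hK_fin : ∀ i, hausdorffEdist K (M i) ≠ ⊤ := fun i => ne_top_of_le_ne_top (hd_fin i) (hle i)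
  have hsum_le : ∑ i, hausdorffEdist K (M i) ≤ ∑ i, hausdorffEdist K₁ (M i) := by
    simpa only [hd₁] using Finset.sum_le_sum fun i _ => hle i
  have hsum_eq : ∑ i, hausdorffEdist K (M i) = ∑ i, d i := by
    simp only [← hd₁]
    exact hsum_le.antisymm (hK₁.2.2.2 K hKne hKcl hK_fin)
  exact ⟨hK₁.of_sum_le hKne hKcl hK_fin hsum_le,
    congrFun ((ENNReal.sum_eq_sum_iff_of_le hle hd_fin).1 hsum_eq)⟩

/-- If `K₁ ⊆ K₂` are Fermat–Steiner solutions with the same distance vector `d`, then any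
nonempty closed set `K` with `K₁ ⊆ K ⊆ K₂` is also a solution with distance vector `d`. -/
theorem stmt13 {X : Type*} [MetricSpace X] {n : ℕ} (M : Fin n → Set X)
    (hM : ∀ i, (M i).Nonempty ∧ IsClosed (M i))
    (hfin : ∀ i j, hausdorffEdist (M i) (M j) ≠ ⊤)
    (d : Fin n → ℝ≥0∞)
    (K₁ K₂ : Set X) (hK₁ : IsFSSol M K₁) (hK₂ : IsFSSol M K₂)
    (hd₁ : ∀ i, hausdorffEdist K₁ (M i) = d i)
    (hd₂ : ∀ i, hausdorffEdist K₂ (M i) = d i)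
    (h12 : K₁ ⊆ K₂)
    (K : Set X) (hKne : K.Nonempty) (hKcl : IsClosed K) (h1K : K₁ ⊆ K) (hK2 : K ⊆ K₂) :
    IsFSSol M K ∧ ∀ i, hausdorffEdist K (M i) = d i :=
  stmt13_general M d K₁ K₂ hK₁ hd₁ hd₂ K hKne hKcl h1K hK2
end

section
/- Let X be a metric space, M_1, ..., M_n nonempty closed subsets with pairwise finite Hausdorff distances, and suppose K is a solution of the Fermat–Steiner problem with d_H(K, M_i) = d_i for all i. Then K_d := ∩_{i=1}^n B_{d_i}(M_i) also satisfies d_H(K_d, M_i) = d_i for all i (hence is a solution), and every solution K' with distance vector (d_1,...,d_n) satisfies K' ⊆ K_d; i.e., K_d is the greatest element of the solution class Σ_d with respect to inclusion. -/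
open EMetric ENNReal

open Metric

/-!
Every set at Hausdorff distance at most `d i` from each `M i` lies in `K_d = ⋂ i B_{d i}(M i)`,
in particular `K ⊆ K_d`. Enlarging `K` inside `B_{d i}(M i)` keeps every point of `M i` within
`d i` of the set, so `d_H(K_d, M i) ≤ d i`. Minimality of `K` gives `∑ d i ≤ ∑ d_H(K_d, M i)`,
and since the `d i` are finite, each of these inequalities is an equality.
-/

theorem ENNReal.eq_of_sum_le_of_le {ι : Type*} [Fintype ι] {f g : ι → ℝ≥0∞}
    (hg : ∀ i, g i ≠ ∞) (hle : ∀ i, f i ≤ g i) (hsum : ∑ i, g i ≤ ∑ i, f i) : f = g := by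
  lift g to ι → NNReal using hg
  lift f to ι → NNReal using fun i => ne_top_of_le_ne_top coe_ne_top (hle i)
  simp only [coe_le_coe] at hle
  simp only [← ofNNReal_finsetSum, coe_le_coe] at hsum
  have hfg := (Finset.sum_eq_sum_iff_of_le fun i _ => hle i).1
    (le_antisymm (Finset.sum_le_sum fun i _ => hle i) hsum)
  funext i
  exact congrArg _ (hfg i (Finset.mem_univ i))

section BallIntersection

variable {X ι : Type*} [PseudoEMetricSpace X]

theorem subset_iInter_infEDist_le {M : ι → Set X} {d : ι → ℝ≥0∞} {K : Set X}
    (hK : ∀ i, hausdorffEDist K (M i) ≤ d i) : K ⊆ ⋂ i, {p | infEDist p (M i) ≤ d i} :=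
  fun _ hx => Set.mem_iInter.2 fun i => (infEDist_le_hausdorffEDist_of_mem hx).trans (hK i)

theorem isClosed_iInter_infEDist_le (M : ι → Set X) (d : ι → ℝ≥0∞) :
    IsClosed (⋂ i, {p | infEDist p (M i) ≤ d i}) :=
  isClosed_iInter fun _ => isClosed_le continuous_infEDist continuous_const

theorem hausdorffEDist_le_of_subset_of_subset_infEDist_le {K L M : Set X} {r : ℝ≥0∞}
    (hKL : K ⊆ L) (hL : L ⊆ {p | infEDist p M ≤ r}) (hK : hausdorffEDist K M ≤ r) :
    hausdorffEDist L M ≤ r := by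
  refine hausdorffEDist_le_of_infEDist (fun x hx => hL hx) fun y hy => ?_
  calc infEDist y L ≤ infEDist y K := infEDist_anti hKL
    _ ≤ hausdorffEDist M K := infEDist_le_hausdorffEDist_of_mem hy
    _ = hausdorffEDist K M := hausdorffEDist_comm
    _ ≤ r := hK

end BallIntersection

theorem IsFSSol.of_sum_le_s14 {X : Type*} [MetricSpace X] {n : ℕ} {M : Fin n → Set X} {K L : Set X}
    (hK : IsFSSol M K) (hL : L.Nonempty) (hLc : IsClosed L)
    (hLfin : ∀ i, hausdorffEDist L (M i) ≠ ⊤)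
    (hsum : ∑ i, hausdorffEDist L (M i) ≤ ∑ i, hausdorffEDist K (M i)) : IsFSSol M L :=
  ⟨hL, hLc, hLfin, fun K' h₁ h₂ h₃ => hsum.trans (hK.2.2.2 K' h₁ h₂ h₃)⟩

theorem IsFSSol.hausdorffEDist_iInter_infEDist_le_eq {X : Type*} [MetricSpace X] {n : ℕ}
    {M : Fin n → Set X} {K : Set X} {d : Fin n → ℝ≥0∞} (hK : IsFSSol M K)
    (hd : ∀ i, hausdorffEDist K (M i) = d i) (i : Fin n) :
    hausdorffEDist (⋂ j, {p | infEDist p (M j) ≤ d j}) (M i) = d i := by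
  obtain ⟨hKne, -, hKfin, hKmin⟩ := hK
  have hKsub := subset_iInter_infEDist_le fun i => (hd i).le
  have hle : ∀ i, hausdorffEDist (⋂ j, {p | infEDist p (M j) ≤ d j}) (M i) ≤ d i := fun i =>
    hausdorffEDist_le_of_subset_of_subset_infEDist_le hKsub (Set.iInter_subset _ i) (hd i).le
  have hdfin : ∀ i, d i ≠ ⊤ := fun i => hd i ▸ hKfin i
  refine congrFun (ENNReal.eq_of_sum_le_of_le hdfin hle ?_) i
  refine (Finset.sum_congr rfl fun i _ => (hd i).symm).trans_le ?_
  exact hKmin _ (hKne.mono hKsub) (isClosed_iInter_infEDist_le M d)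
    fun i => ne_top_of_le_ne_top (hdfin i) (hle i)

theorem stmt14_general {X : Type*} [MetricSpace X] {n : ℕ} (M : Fin n → Set X)
    (d : Fin n → ℝ≥0∞)
    (K : Set X) (hK : IsFSSol M K) (hd : ∀ i, hausdorffEdist K (M i) = d i)
    (Kd : Set X) (hKd : Kd = ⋂ i, {p : X | infEdist p (M i) ≤ d i}) :
    IsFSSol M Kd ∧ (∀ i, hausdorffEdist Kd (M i) = d i) ∧
      ∀ K' : Set X, IsFSSol M K' → (∀ i, hausdorffEdist K' (M i) = d i) → K' ⊆ Kd := by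
  subst hKd
  have heq := hK.hausdorffEDist_iInter_infEDist_le_eq hd
  have hsub : ∀ K', (∀ i, hausdorffEDist K' (M i) = d i) →
      K' ⊆ ⋂ i, {p | infEDist p (M i) ≤ d i} :=
    fun K' hK' => subset_iInter_infEDist_le fun i => (hK' i).le
  refine ⟨hK.of_sum_le_s14 (hK.1.mono (hsub K hd)) (isClosed_iInter_infEDist_le M d) ?_ ?_, heq,
    fun K' _ => hsub K'⟩
  · exact fun i => ne_of_eq_of_ne ((heq i).trans (hd i).symm) (hK.2.2.1 i)
  · exact (Finset.sum_congr rfl fun i _ => (heq i).trans (hd i).symm).le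

/-- `K_d = ⋂ i B_{d i}(M i)` is the greatest element (w.r.t. inclusion) of the solution
class `Σ_d` of the Fermat–Steiner problem. -/
theorem stmt14 {X : Type*} [MetricSpace X] {n : ℕ} (M : Fin n → Set X)
    (hM : ∀ i, (M i).Nonempty ∧ IsClosed (M i))
    (hfin : ∀ i j, hausdorffEdist (M i) (M j) ≠ ⊤)
    (d : Fin n → ℝ≥0∞)
    (K : Set X) (hK : IsFSSol M K) (hd : ∀ i, hausdorffEdist K (M i) = d i)
    (Kd : Set X) (hKd : Kd = ⋂ i, {p : X | infEdist p (M i) ≤ d i}) :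
    IsFSSol M Kd ∧ (∀ i, hausdorffEdist Kd (M i) = d i) ∧
      ∀ K' : Set X, IsFSSol M K' → (∀ i, hausdorffEdist K' (M i) = d i) → K' ⊆ Kd :=
  stmt14_general M d K hK hd Kd hKd
end

section
/- Let X be a metric space, M_1, ..., M_n nonempty closed subsets with pairwise finite Hausdorff distances, and d = (d_1,...,d_n) the distance vector of a class of Fermat–Steiner solutions with greatest element K_d = ∩_i B_{d_i}(M_i). If d_i = sup_{x ∈ M_i} |x K_d| for some index i, then for every solution K in the class Σ_d we also have d_i = sup_{x ∈ M_i} |x K|. -/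
open EMetric ENNReal

namespace Metric

variable {α : Type*} [PseudoEMetricSpace α]

theorem iSup_infEDist_le_hausdorffEDist (s t : Set α) :
    ⨆ x ∈ s, infEDist x t ≤ hausdorffEDist s t :=
  iSup₂_le fun _ hx => infEDist_le_hausdorffEDist_of_mem hx

theorem iSup_infEDist_anti {s t₁ t₂ : Set α} (h : t₁ ⊆ t₂) :
    ⨆ x ∈ s, infEDist x t₂ ≤ ⨆ x ∈ s, infEDist x t₁ :=
  iSup₂_mono fun _ _ => infEDist_anti h

theorem subset_iInter_infEDist_le_of_hausdorffEDist_le {ι : Sort*} {K : Set α}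
    {M : ι → Set α} {d : ι → ℝ≥0∞} (h : ∀ j, hausdorffEDist K (M j) ≤ d j) :
    K ⊆ ⋂ j, {p | infEDist p (M j) ≤ d j} :=
  fun _ hp => Set.mem_iInter.2 fun j => (infEDist_le_hausdorffEDist_of_mem hp).trans (h j)

end Metric

theorem stmt16_general {X : Type*} [MetricSpace X] {n : ℕ} (M : Fin n → Set X)
    (d : Fin n → ℝ≥0∞)
    (Kd : Set X) (hKd : Kd = ⋂ j, {p : X | infEdist p (M j) ≤ d j})
    (i : Fin n) (hi : d i = ⨆ x ∈ M i, infEdist x Kd)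
    (K : Set X) (hdK : ∀ j, hausdorffEdist K (M j) = d j) :
    d i = ⨆ x ∈ M i, infEdist x K := by
  have hK_sub : K ⊆ Kd :=
    hKd ▸ Metric.subset_iInter_infEDist_le_of_hausdorffEDist_le fun j => (hdK j).le
  apply le_antisymm
  · exact hi ▸ Metric.iSup_infEDist_anti hK_sub
  · calc ⨆ x ∈ M i, infEdist x K ≤ hausdorffEdist (M i) K :=
          Metric.iSup_infEDist_le_hausdorffEDist _ _
      _ = d i := Metric.hausdorffEDist_comm.trans (hdK i)

/-- If the distance `d i` is realized one-sidedly from `M i` on the greatest solution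
`K_d`, then it is realized one-sidedly from `M i` on every solution `K ∈ Σ_d`. -/
theorem stmt16 {X : Type*} [MetricSpace X] {n : ℕ} (M : Fin n → Set X)
    (hM : ∀ j, (M j).Nonempty ∧ IsClosed (M j))
    (hfin : ∀ i j, hausdorffEdist (M i) (M j) ≠ ⊤)
    (d : Fin n → ℝ≥0∞)
    (Kd : Set X) (hKd : Kd = ⋂ j, {p : X | infEdist p (M j) ≤ d j})
    (i : Fin n) (hi : d i = ⨆ x ∈ M i, infEdist x Kd)
    (K : Set X) (hK : IsFSSol M K) (hdK : ∀ j, hausdorffEdist K (M j) = d j) :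
    d i = ⨆ x ∈ M i, infEdist x K :=
  stmt16_general M d Kd hKd i hi K hdK
end

section
/- Let X be a connected metric space and M_1, ..., M_n nonempty closed subsets with pairwise finite Hausdorff distances. Let d = (d_1,...,d_n) be the distance vector of a Fermat–Steiner solution and K_d = ∩_{i=1}^n B_{d_i}(M_i) the greatest solution in its class. Then there exists an index i such that d_i = sup_{x ∈ K_d} |x M_i|. -/
/-!
If every `d i` exceeded `sup_{x ∈ K_d} |x M_i|`, then each closed constraint `|x M_i| ≤ d i`
would hold strictly on `K_d`, so `K_d` would also be the finite intersection of the open sets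
`{x | |x M_i| < d i}`. Being nonempty and clopen in a connected space, `K_d = X`; but then
`d i = d_H(X, M_i) = sup_{x ∈ X} |x M_i| < d i`.
-/

open EMetric ENNReal

open Metric Set

lemma hausdorffEDist_eq_iSup_infEDist_of_subset {α : Type*} [PseudoEMetricSpace α]
    {s t : Set α} (hts : t ⊆ s) : hausdorffEDist s t = ⨆ x ∈ s, infEDist x t := by
  have hts' : ⨆ y ∈ t, infEDist y s = 0 := by
    simp only [ENNReal.iSup_eq_zero]
    exact fun y hy => infEDist_zero_of_mem (hts hy)
  rw [hausdorffEDist_def, hts']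
  exact max_eq_left zero_le

lemma iInter_infEDist_le_eq_univ {ι X : Type*} [Finite ι] [PseudoEMetricSpace X]
    [ConnectedSpace X] {M : ι → Set X} {d : ι → ℝ≥0∞}
    (hne : (⋂ i, {p | infEDist p (M i) ≤ d i}).Nonempty)
    (hlt : ∀ i, ⨆ x ∈ ⋂ j, {p | infEDist p (M j) ≤ d j}, infEDist x (M i) < d i) :
    ⋂ i, {p | infEDist p (M i) ≤ d i} = univ := by
  set K := ⋂ i, {p | infEDist p (M i) ≤ d i}
  have hK_eq : K = ⋂ i, {p | infEDist p (M i) < d i} :=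
    Subset.antisymm
      (fun x hx => mem_iInter.2 fun i =>
        (le_iSup₂ (f := fun y _ => infEDist y (M i)) x hx).trans_lt (hlt i))
      (iInter_mono fun _ => setOf_subset_setOf.2 fun _ => le_of_lt)
  have hclosed : IsClosed K :=
    isClosed_iInter fun i => isClosed_le continuous_infEDist continuous_const
  have hopen : IsOpen K := by
    rw [hK_eq]
    exact isOpen_iInter_of_finite fun i => isOpen_lt continuous_infEDist continuous_const
  exact IsClopen.eq_univ ⟨hclosed, hopen⟩ hne

theorem stmt17_general {X : Type*} [MetricSpace X] [ConnectedSpace X] {n : ℕ} (hn : 0 < n)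
    (M : Fin n → Set X)
    (d : Fin n → ℝ≥0∞)
    (Kd : Set X) (hKd : Kd = ⋂ i, {p : X | infEdist p (M i) ≤ d i})
    (hKdne : Kd.Nonempty) (hKddist : ∀ i, hausdorffEdist Kd (M i) = d i) :
    ∃ i, d i = ⨆ x ∈ Kd, infEdist x (M i) := by
  by_contra! h
  subst hKd
  have hlt : ∀ i, ⨆ x ∈ ⋂ j, {p | infEDist p (M j) ≤ d j}, infEDist x (M i) < d i :=
    fun i => lt_of_le_of_ne (iSup₂_le fun x hx => mem_iInter.1 hx i) (h i).symm
  have huniv := iInter_infEDist_le_eq_univ hKdne hlt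
  let i : Fin n := ⟨0, hn⟩
  apply (hlt i).ne
  rw [← hKddist i]
  exact (hausdorffEDist_eq_iSup_infEDist_of_subset (huniv ▸ subset_univ _)).symm

/-- In a connected metric space, for the greatest Fermat–Steiner solution
`K_d = ⋂ i B_{d i}(M i)` there is an index `i` with `d i = sup_{x ∈ K_d} |x M_i|`. -/
theorem stmt17 {X : Type*} [MetricSpace X] [ConnectedSpace X] {n : ℕ} (hn : 0 < n)
    (M : Fin n → Set X)
    (hM : ∀ i, (M i).Nonempty ∧ IsClosed (M i))
    (hfin : ∀ i j, hausdorffEdist (M i) (M j) ≠ ⊤)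
    (d : Fin n → ℝ≥0∞) (hdfin : ∀ i, d i ≠ ⊤)
    (hsol : ∃ K₀ : Set X, IsFSSol M K₀ ∧ ∀ i, hausdorffEdist K₀ (M i) = d i)
    (Kd : Set X) (hKd : Kd = ⋂ i, {p : X | infEdist p (M i) ≤ d i})
    (hKdne : Kd.Nonempty) (hKddist : ∀ i, hausdorffEdist Kd (M i) = d i) :
    ∃ i, d i = ⨆ x ∈ Kd, infEdist x (M i) :=
  stmt17_general hn M d Kd hKd hKdne hKddist
end
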